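/- arXiv:1111.3270 — 3 statements merged into one kernel-verified Lean document; each statement's English description precedes it below -/
import Mathlib

section
/- In a triadic context (G, M, B, Y), for every triadic concept (A₁, A₂, A₃) and every pair i ≠ j of coordinates, the pair formed by the i-th and j-th components is a dyadic formal concept of the dyadic context K^{ij}_{A_k} whose incidence is (a_i, a_j) ∈ Y^{ij}_{A_k} ⟺ (a_i, a_j, a_k) ∈ Y for all a_k ∈ A_k, where k is the remaining coordinate. -/
/-- A dyadic formal concept of a context with incidence `I`. -/
def IsDyadicConcept {α β : Type*} (I : Set (α × β)) (A : Set α) (B : Set β) : Prop :=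
  {b : β | ∀ a ∈ A, (a, b) ∈ I} = B ∧ {a : α | ∀ b ∈ B, (a, b) ∈ I} = A

/-- A triadic concept of a triadic context `Y ⊆ K₁ × K₂ × K₃`. -/
def IsTriadicConcept {K₁ K₂ K₃ : Type*} (Y : Set (K₁ × K₂ × K₃))
    (A₁ : Set K₁) (A₂ : Set K₂) (A₃ : Set K₃) : Prop :=
  (∀ a₁ ∈ A₁, ∀ a₂ ∈ A₂, ∀ a₃ ∈ A₃, (a₁, a₂, a₃) ∈ Y) ∧
  ∀ X₁ X₂ X₃, (∀ a₁ ∈ X₁, ∀ a₂ ∈ X₂, ∀ a₃ ∈ X₃, (a₁, a₂, a₃) ∈ Y) →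
    A₁ ⊆ X₁ → A₂ ⊆ X₂ → A₃ ⊆ X₃ → A₁ = X₁ ∧ A₂ = X₂ ∧ A₃ = X₃

/-- For every triadic concept `(A₁,A₂,A₃)` and every pair of distinct coordinates
`i ≠ j`, the `(i,j)`-components form a dyadic concept of the dyadic context
`K^{ij}_{A_k}` with incidence `(a_i,a_j) ∈ Y^{ij}_{A_k} ⟺ ∀ a_k ∈ A_k, (a_i,a_j,a_k) ∈ Y`. -/
theorem triadic_concept_projects_to_dyadic_concepts
    {K₁ K₂ K₃ : Type*} (Y : Set (K₁ × K₂ × K₃))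
    (A₁ : Set K₁) (A₂ : Set K₂) (A₃ : Set K₃)
    (h : IsTriadicConcept Y A₁ A₂ A₃) :
    IsDyadicConcept {p : K₁ × K₂ | ∀ a₃ ∈ A₃, (p.1, p.2, a₃) ∈ Y} A₁ A₂ ∧
    IsDyadicConcept {p : K₁ × K₃ | ∀ a₂ ∈ A₂, (p.1, a₂, p.2) ∈ Y} A₁ A₃ ∧
    IsDyadicConcept {p : K₂ × K₃ | ∀ a₁ ∈ A₁, (a₁, p.1, p.2) ∈ Y} A₂ A₃ := by
  obtain ⟨hY, hmax⟩ := h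
  refine ⟨⟨?_, ?_⟩, ⟨?_, ?_⟩, ⟨?_, ?_⟩⟩
  · exact ((hmax A₁ {b | ∀ a ∈ A₁, ∀ a₃ ∈ A₃, (a, b, a₃) ∈ Y} A₃
      (fun a₁ h1 a₂ h2 a₃ h3 => h2 a₁ h1 a₃ h3)
      subset_rfl (fun b hb a h1 a₃ h3 => hY a h1 b hb a₃ h3) subset_rfl).2.1).symm
  · exact ((hmax {a | ∀ b ∈ A₂, ∀ a₃ ∈ A₃, (a, b, a₃) ∈ Y} A₂ A₃
      (fun a₁ h1 a₂ h2 a₃ h3 => h1 a₂ h2 a₃ h3)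
      (fun a ha b hb a₃ h3 => hY a ha b hb a₃ h3) subset_rfl subset_rfl).1).symm
  · exact ((hmax A₁ A₂ {c | ∀ a ∈ A₁, ∀ a₂ ∈ A₂, (a, a₂, c) ∈ Y}
      (fun a₁ h1 a₂ h2 a₃ h3 => h3 a₁ h1 a₂ h2)
      subset_rfl subset_rfl (fun c hc a h1 a₂ h2 => hY a h1 a₂ h2 c hc)).2.2).symm
  · exact ((hmax {a | ∀ c ∈ A₃, ∀ a₂ ∈ A₂, (a, a₂, c) ∈ Y} A₂ A₃
      (fun a₁ h1 a₂ h2 a₃ h3 => h1 a₃ h3 a₂ h2)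
      (fun a ha c hc a₂ h2 => hY a ha a₂ h2 c hc) subset_rfl subset_rfl).1).symm
  · exact ((hmax A₁ A₂ {c | ∀ b ∈ A₂, ∀ a₁ ∈ A₁, (a₁, b, c) ∈ Y}
      (fun a₁ h1 a₂ h2 a₃ h3 => h3 a₂ h2 a₁ h1)
      subset_rfl subset_rfl (fun c hc b h2 a h1 => hY a h1 b h2 c hc)).2.2).symm
  · exact ((hmax A₁ {b | ∀ c ∈ A₃, ∀ a₁ ∈ A₁, (a₁, b, c) ∈ Y} A₃
      (fun a₁ h1 a₂ h2 a₃ h3 => h2 a₃ h3 a₁ h1)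
      subset_rfl (fun b hb c h3 a h1 => hY a h1 b hb c h3) subset_rfl).2.1).symm
end

section
/- Let (G, M, val) be a finite numerical dataset, θ ∈ ℕ, and C the linearly ordered set of tolerance blocks of W = range(val) (each identified with its convex hull interval). Let (G, M, C, Y) be the TriMax scaled context with (g, m, c) ∈ Y ⟺ val(g,m) ∈ c. If (A, B, U) is a triadic concept of this context with |U| = 1, then (A, B) is a maximal bicluster of similar values for θ. -/
/-!
The single block `c` of the modus is pairwise `θ`-similar, so its convex hull is too, and the
values of `A × B` all lie in that hull: `(A, B)` is a bicluster. If `(A', B') ⊇ (A, B)` is a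
bicluster, its values form a `θ`-similar set, contained in some tolerance block `V`. Then
`(A, B, {c, V})` is incident, so maximality of the modus forces `V = c`; hence `(A', B', {c})` is
incident and maximality of the extent and intent gives `(A', B') = (A, B)`.
-/

section TriadicConcept

variable {G M K : Type*}

structure IsTriadicConcept_s17 (C : Set K) (Y : G → M → K → Prop)
    (A : Set G) (B : Set M) (U : Set K) : Prop where
  subset : U ⊆ C
  incident : ∀ g ∈ A, ∀ m ∈ B, ∀ u ∈ U, Y g m u
  maximal : ∀ (A' : Set G) (B' : Set M) (U' : Set K), U' ⊆ C →
    (∀ g ∈ A', ∀ m ∈ B', ∀ u ∈ U', Y g m u) →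
    A ⊆ A' → B ⊆ B' → U ⊆ U' → A = A' ∧ B = B' ∧ U = U'

variable {C : Set K} {Y : G → M → K → Prop} {A A' : Set G} {B B' : Set M} {c V : K}

theorem IsTriadicConcept_s17.eq_of_incident (hT : IsTriadicConcept_s17 C Y A B {c}) (hV : V ∈ C)
    (hY : ∀ g ∈ A, ∀ m ∈ B, Y g m V) : V = c := by
  have hcV : ({c} : Set K) = {c, V} := by
    refine (hT.maximal A B {c, V} (Set.insert_subset (hT.subset rfl) (Set.singleton_subset_iff.2 hV)) ?_
      subset_rfl subset_rfl (Set.singleton_subset_iff.2 (Set.mem_insert c _))).2.2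
    rintro g hg m hm u (rfl | rfl)
    exacts [hT.incident g hg m hm u rfl, hY g hg m hm]
  exact Set.mem_singleton_iff.1 (hcV ▸ Set.mem_insert_of_mem c rfl)

theorem IsTriadicConcept_s17.eq_of_subset_of_incident (hT : IsTriadicConcept_s17 C Y A B {c})
    (hV : V ∈ C) (hA : A ⊆ A') (hB : B ⊆ B') (hY : ∀ g ∈ A', ∀ m ∈ B', Y g m V) :
    A = A' ∧ B = B' := by
  obtain rfl : V = c := hT.eq_of_incident hV fun g hg m hm => hY g (hA hg) m (hB hm)
  have h := hT.maximal A' B' {V} hT.subset (fun g hg m hm u hu => hu ▸ hY g hg m hm)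
    hA hB subset_rfl
  exact ⟨h.1, h.2.1⟩

end TriadicConcept

section ToleranceBlock

variable {α : Type*} [AddCommGroup α] [LinearOrder α]

def IsSimilar (t : α) (s : Finset α) : Prop :=
  ∀ x ∈ s, ∀ y ∈ s, |x - y| ≤ t

def IsToleranceBlock (t : α) (W V : Finset α) : Prop :=
  V ⊆ W ∧ V.Nonempty ∧ IsSimilar t V ∧
    ∀ V' : Finset α, V' ⊆ W → IsSimilar t V' → V ⊆ V' → V = V'

variable {t : α} {S W c : Finset α}

theorem IsSimilar.abs_sub_le_of_mem_hull [IsOrderedAddMonoid α] (hc : IsSimilar t c) {x y : α}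
    (hx : ∃ a ∈ c, ∃ b ∈ c, a ≤ x ∧ x ≤ b) (hy : ∃ a ∈ c, ∃ b ∈ c, a ≤ y ∧ y ≤ b) :
    |x - y| ≤ t := by
  obtain ⟨a₁, ha₁, b₁, hb₁, hax, hxb⟩ := hx
  obtain ⟨a₂, ha₂, b₂, hb₂, hay, hyb⟩ := hy
  have h₁ := (abs_sub_le_iff.1 (hc b₁ hb₁ a₂ ha₂)).1
  have h₂ := (abs_sub_le_iff.1 (hc b₂ hb₂ a₁ ha₁)).1
  exact abs_sub_le_iff.2 ⟨(sub_le_sub hxb hay).trans h₁, (sub_le_sub hyb hax).trans h₂⟩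

theorem exists_isToleranceBlock_superset (hSW : S ⊆ W) (hS : IsSimilar t S)
    (hne : S.Nonempty) : ∃ V, S ⊆ V ∧ IsToleranceBlock t W V := by
  have hfin : {V : Finset α | V ⊆ W ∧ IsSimilar t V}.Finite :=
    W.powerset.finite_toSet.subset fun V hV => Finset.mem_powerset.2 hV.1
  obtain ⟨V, hSV, hV⟩ := hfin.exists_le_maximal ⟨hSW, hS⟩
  exact ⟨V, hSV, hV.1.1, hne.mono hSV, hV.1.2,
    fun V' hV'W hV' hVV' => hV.eq_of_le ⟨hV'W, hV'⟩ hVV'⟩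

end ToleranceBlock

section Bicluster

variable {G M α : Type*} [AddCommGroup α] [LinearOrder α]

def IsBicluster (val : G × M → α) (t : α) (A : Set G) (B : Set M) : Prop :=
  ∀ g ∈ A, ∀ h ∈ A, ∀ m ∈ B, ∀ n ∈ B, |val (g, m) - val (h, n)| ≤ t

variable {val : G × M → α} {t : α} {W c : Finset α} {A : Set G} {B : Set M}

/-- `c` serves only as the witness for an empty bicluster. -/
theorem IsBicluster.exists_isToleranceBlock (hAB : IsBicluster val t A B)
    (hW : ∀ p, val p ∈ W) (hc : IsToleranceBlock t W c) :
    ∃ V, IsToleranceBlock t W V ∧ ∀ g ∈ A, ∀ m ∈ B, val (g, m) ∈ V := by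
  classical
  rcases (A ×ˢ B).eq_empty_or_nonempty with hempty | ⟨⟨g₀, m₀⟩, hg₀, hm₀⟩
  · exact ⟨c, hc, fun g hg m hm => absurd (hempty ▸ Set.mk_mem_prod hg hm) (Set.notMem_empty _)⟩
  let S := W.filter (· ∈ val '' A ×ˢ B)
  have hmem : ∀ g ∈ A, ∀ m ∈ B, val (g, m) ∈ S := fun g hg m hm =>
    Finset.mem_filter.2 ⟨hW _, Set.mem_image_of_mem _ (Set.mk_mem_prod hg hm)⟩
  have hS : IsSimilar t S := by
    intro x hx y hy
    obtain ⟨⟨g, m⟩, ⟨hg, hm⟩, rfl⟩ := (Finset.mem_filter.1 hx).2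
    obtain ⟨⟨h, n⟩, ⟨hh, hn⟩, rfl⟩ := (Finset.mem_filter.1 hy).2
    exact hAB g hg h hh m hm n hn
  obtain ⟨V, hSV, hV⟩ :=
    exists_isToleranceBlock_superset (Finset.filter_subset _ _) hS ⟨_, hmem g₀ hg₀ m₀ hm₀⟩
  exact ⟨V, hV, fun g hg m hm => hSV (hmem g hg m hm)⟩

end Bicluster

/-- In the TriMax scaled context (conditions = tolerance blocks of the value set,
identified with their convex hulls), a triadic concept whose modus is a singleton
yields a maximal bicluster of similar values for `θ`. -/
theorem trimax_singleton_modus_maximal_bicluster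
    {G M : Type*} [Fintype G] [Fintype M] (val : G × M → ℤ) (θ : ℕ)
    (A : Set G) (B : Set M) (U : Set (Finset ℤ)) :
    let W : Finset ℤ := (Finset.univ : Finset (G × M)).image val
    -- tolerance blocks of W (maximal pairwise-similar subsets)
    let C : Set (Finset ℤ) := {V | V ⊆ W ∧ V.Nonempty ∧
      (∀ w₁ ∈ V, ∀ w₂ ∈ V, |w₁ - w₂| ≤ (θ : ℤ)) ∧
      (∀ V' : Finset ℤ, V' ⊆ W → (∀ w₁ ∈ V', ∀ w₂ ∈ V', |w₁ - w₂| ≤ (θ : ℤ)) →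
        V ⊆ V' → V = V')}
    -- incidence: val(g,m) lies in the convex hull of the block c
    let inc : G → M → Finset ℤ → Prop := fun g m c =>
      ∃ a ∈ c, ∃ b ∈ c, a ≤ val (g, m) ∧ val (g, m) ≤ b
    let bicluster : Set G → Set M → Prop := fun A' B' =>
      ∀ g ∈ A', ∀ h ∈ A', ∀ m ∈ B', ∀ n ∈ B', |val (g, m) - val (h, n)| ≤ (θ : ℤ)
    -- (A, B, U) is a triadic concept of (G, M, C, Y)
    (U ⊆ C) →
    (∀ g ∈ A, ∀ m ∈ B, ∀ c ∈ U, inc g m c) →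
    (∀ (A' : Set G) (B' : Set M) (U' : Set (Finset ℤ)), U' ⊆ C →
      (∀ g ∈ A', ∀ m ∈ B', ∀ c ∈ U', inc g m c) →
      A ⊆ A' → B ⊆ B' → U ⊆ U' → A = A' ∧ B = B' ∧ U = U') →
    -- the modus is a singleton
    (∃ c, U = {c}) →
    bicluster A B ∧ (∀ g ∉ A, ¬ bicluster (insert g A) B) ∧
      (∀ m ∉ B, ¬ bicluster A (insert m B)) := by
  intro W C inc bicluster hUC hInc hMax hU
  obtain ⟨c, rfl⟩ := hU
  have hT : IsTriadicConcept_s17 C inc A B {c} := ⟨hUC, hInc, hMax⟩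
  have hc : IsToleranceBlock (θ : ℤ) W c := hUC rfl
  have hW : ∀ p, val p ∈ W := fun p => Finset.mem_image_of_mem val (Finset.mem_univ p)
  have hmax : ∀ A' B', A ⊆ A' → B ⊆ B' → bicluster A' B' → A = A' ∧ B = B' := by
    intro A' B' hA hB hbic
    obtain ⟨V, hV, hval⟩ := IsBicluster.exists_isToleranceBlock hbic hW hc
    exact hT.eq_of_subset_of_incident hV hA hB
      fun g hg m hm => ⟨_, hval g hg m hm, _, hval g hg m hm, le_rfl, le_rfl⟩
  refine ⟨fun g hg h hh m hm n hn =>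
      hc.2.2.1.abs_sub_le_of_mem_hull (hInc g hg m hm c rfl) (hInc h hh n hn c rfl),
    fun g hg hbic => hg ?_, fun m hm hbic => hm ?_⟩
  · exact (hmax _ B (Set.subset_insert g A) subset_rfl hbic).1 ▸ Set.mem_insert g A
  · exact (hmax A _ subset_rfl (Set.subset_insert m B) hbic).2 ▸ Set.mem_insert m B
end

section
/- In the TriMax scaled context (G, M, C, Y) for parameter θ, every dyadic concept (A, B) of the dyadic context associated with a tolerance block c ∈ C (incidence (g,m) ∈ Z_c ⟺ val(g,m) ∈ c) with A and B nonempty is a bicluster of similar values for θ (not necessarily maximal). -/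
/-- Every dyadic concept (with nonempty extent and intent) of the dyadic context
associated with a tolerance block `c` (incidence `val(g,m) ∈` convex hull of `c`)
is a bicluster of similar values for `θ` (not necessarily maximal). -/
theorem trimax_dyadic_concept_is_bicluster
    {G M : Type*} [Fintype G] [Fintype M] (val : G × M → ℤ) (θ : ℕ)
    (c : Finset ℤ) (A : Set G) (B : Set M) :
    let W : Finset ℤ := (Finset.univ : Finset (G × M)).image val
    let inc : G → M → Prop := fun g m =>
      ∃ a ∈ c, ∃ b ∈ c, a ≤ val (g, m) ∧ val (g, m) ≤ b
    -- c is a tolerance block of W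
    (c ⊆ W) → c.Nonempty →
    (∀ w₁ ∈ c, ∀ w₂ ∈ c, |w₁ - w₂| ≤ (θ : ℤ)) →
    (∀ V' : Finset ℤ, V' ⊆ W → (∀ w₁ ∈ V', ∀ w₂ ∈ V', |w₁ - w₂| ≤ (θ : ℤ)) →
      c ⊆ V' → c = V') →
    -- (A, B) is a dyadic concept of (G, M, Z_c)
    ({m : M | ∀ g ∈ A, inc g m} = B) →
    ({g : G | ∀ m ∈ B, inc g m} = A) →
    A.Nonempty → B.Nonempty →
    ∀ g ∈ A, ∀ h ∈ A, ∀ m ∈ B, ∀ n ∈ B, |val (g, m) - val (h, n)| ≤ (θ : ℤ) := by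
  intro W inc hcW hcne hsim _ hB hA _ _ g hg h hh m hm n hn
  have h1 : inc g m := by rw [← hB] at hm; exact hm g hg
  have h2 : inc h n := by rw [← hB] at hn; exact hn h hh
  obtain ⟨a₁, ha₁, b₁, hb₁, hl₁, hu₁⟩ := h1
  obtain ⟨a₂, ha₂, b₂, hb₂, hl₂, hu₂⟩ := h2
  have t1 := hsim b₁ hb₁ a₂ ha₂
  have t2 := hsim a₁ ha₁ b₂ hb₂
  rw [abs_le] at t1 t2 ⊢
  omega
end
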